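/- arXiv:1802.09324 — 2 statements merged into one kernel-verified Lean document; each statement's English description precedes it below -/
import Mathlib

section
/- Let r ≥ 1 and m ≥ 1 be integers and let S ⊆ A(r,m) be a pierced simplex. Then for each i ∈ {1,…,r}, the convex hull of S intersects the i-th coordinate axis ℝ·e_i in exactly one point, and this point is of the form t_i·e_i with t_i > 0. -/
/-- The point `a_{i,j,k}` of the construction `A(r,m)` (indices `i,j,k` are 1-based). -/
noncomputable def pt (r m i j k : ℕ) : Fin r → ℝ := fun l =>
  if (l : ℕ) + 1 = i then
    (∑ l' ∈ Finset.Icc (j + 1) r, (m : ℝ) ^ (2 * r - 2 * l' + 3))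
      + ((r - j : ℕ) : ℝ) * (m : ℝ) + (k : ℝ)
  else if j + 1 ≤ (l : ℕ) + 1 then
    -((m : ℝ) ^ (2 * r - 2 * ((l : ℕ) + 1) + 3))
  else 0

/-- The point set `A(r,m) ⊆ ℝ^r`. -/
def Apts (r m : ℕ) : Set (Fin r → ℝ) :=
  {x | ∃ i j k : ℕ, 1 ≤ i ∧ i ≤ j ∧ j ≤ r ∧ 1 ≤ k ∧ k ≤ m ∧ x = pt r m i j k}

/-- The set `C_i` of points of `A(r,m)` of color `i`. -/
def colorSet (r m i : ℕ) : Set (Fin r → ℝ) :=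
  {x | ∃ j k : ℕ, 1 ≤ i ∧ i ≤ j ∧ j ≤ r ∧ 1 ≤ k ∧ k ≤ m ∧ x = pt r m i j k}

/-- The set `L_j` of points of `A(r,m)` of layer `j`. -/
def layerSet (r m j : ℕ) : Set (Fin r → ℝ) :=
  {x | ∃ i k : ℕ, 1 ≤ i ∧ i ≤ j ∧ j ≤ r ∧ 1 ≤ k ∧ k ≤ m ∧ x = pt r m i j k}

/-- A set `S ⊆ ℝ^r` is pierced if its convex hull meets the line `ℝ·1_r`. -/
def Pierced {r : ℕ} (S : Set (Fin r → ℝ)) : Prop :=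
  ∃ c : ℝ, (fun _ => c : Fin r → ℝ) ∈ convexHull ℝ S

/-- The `i`-th standard basis vector of `ℝ^r` (1-based index). -/
def stdVec (r i : ℕ) : Fin r → ℝ := fun l => if (l : ℕ) + 1 = i then 1 else 0

/-! Each point of `A(r,m)` has exactly one positive coordinate, its color, vanishes in the
coordinates before it, and has positive coordinate sum. Hence if `c • 1 ∈ conv S` then `c > 0`,
every coordinate is positive somewhere on `S`, and the `r` points of `S` carry the `r` colors once
each. Listed by color, they are the rows of an upper triangular matrix `M` with positive diagonal
and nonpositive off-diagonal entries. Such an `M` is invertible and `x ᵥ* M ≥ 0` forces `x ≥ 0`,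
so `u = eᵢ ᵥ* M⁻¹` is nonnegative and nonzero, and the barycentric weights of any `t • eᵢ` in
`conv S` must be `t • u`; this pins down `t = (∑ u)⁻¹ > 0`. -/

namespace Matrix

variable {ι : Type*} [Fintype ι]

theorem convexHull_range_row_eq_image_stdSimplex [DecidableEq ι] (M : Matrix ι ι ℝ) :
    convexHull ℝ (Set.range M.row) = (· ᵥ* M) '' stdSimplex ℝ ι := by
  rw [← convexHull_rangle_single_eq_stdSimplex, ← M.coe_vecMulLinear,
    LinearMap.image_convexHull, ← Set.range_comp]
  congr with i
  simp

variable [LinearOrder ι] {M : Matrix ι ι ℝ}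

theorem nonneg_of_nonneg_vecMul (hM : M.IsUpperTriangular) (hoff : ∀ i j, i ≠ j → M i j ≤ 0)
    (hdiag : ∀ i, 0 < M i i) {x : ι → ℝ} (hx : 0 ≤ x ᵥ* M) : 0 ≤ x := by
  intro j
  induction j using WellFoundedLT.induction with
  | _ j ih =>
    have hrest : ∑ i ∈ Finset.univ.erase j, x i * M i j ≤ 0 := by
      refine Finset.sum_nonpos fun i hi => ?_
      rcases lt_or_gt_of_ne (Finset.ne_of_mem_erase hi) with hij | hji
      · exact mul_nonpos_of_nonneg_of_nonpos (ih i hij) (hoff i j hij.ne)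
      · rw [hM hji, mul_zero]
    have hj : 0 ≤ x j * M j j := by
      have := hx j
      rw [Pi.zero_apply, vecMul, dotProduct,
        ← Finset.add_sum_erase _ _ (Finset.mem_univ j)] at this
      linarith
    exact nonneg_of_mul_nonneg_left hj (hdiag j)

theorem exists_unique_smul_single_mem_convexHull_range_row (hM : M.IsUpperTriangular)
    (hoff : ∀ i j, i ≠ j → M i j ≤ 0) (hdiag : ∀ i, 0 < M i i) (i : ι) :
    ∃ t : ℝ, 0 < t ∧ t • Pi.single i 1 ∈ convexHull ℝ (Set.range M.row) ∧
      ∀ t', t' • Pi.single i 1 ∈ convexHull ℝ (Set.range M.row) → t' = t := by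
  have hunit : IsUnit M := by
    rw [isUnit_iff_isUnit_det, det_of_isUpperTriangular hM]
    exact (Finset.prod_pos fun i _ => hdiag i).ne'.isUnit
  set u := Pi.single i 1 ᵥ* M⁻¹
  have hu : u ᵥ* M = Pi.single i 1 := by
    rw [vecMul_vecMul, nonsing_inv_mul _ ((isUnit_iff_isUnit_det M).1 hunit), vecMul_one]
  have hu_nonneg : 0 ≤ u :=
    nonneg_of_nonneg_vecMul hM hoff hdiag (hu ▸ Pi.single_nonneg.2 zero_le_one)
  have hsum : 0 < ∑ j, u j := by
    obtain ⟨j, hj⟩ : ∃ j, u j ≠ 0 := by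
      by_contra! h
      simpa [show u = 0 from funext h] using congrFun hu i
    exact Finset.sum_pos' (fun j _ => hu_nonneg j)
      ⟨j, Finset.mem_univ j, (hu_nonneg j).lt_of_ne' hj⟩
  rw [convexHull_range_row_eq_image_stdSimplex]
  refine ⟨(∑ j, u j)⁻¹, inv_pos.2 hsum, ⟨(∑ j, u j)⁻¹ • u, ⟨fun j => ?_, ?_⟩, ?_⟩, ?_⟩
  · exact mul_nonneg (inv_nonneg.2 hsum.le) (hu_nonneg j)
  · simp [← Finset.mul_sum, hsum.ne']
  · dsimp only
    rw [smul_vecMul, hu]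
  · rintro t ⟨w, ⟨-, hw_sum⟩, hw⟩
    have hw_eq : w = t • u := vecMul_injective_iff_isUnit.2 hunit <| by
      dsimp only at hw ⊢
      rw [hw, smul_vecMul, hu]
    rw [hw_eq] at hw_sum
    simp only [Pi.smul_apply, smul_eq_mul, ← Finset.mul_sum] at hw_sum
    exact eq_inv_of_mul_eq_one_left hw_sum

end Matrix

theorem add_one_eq_of_pt_apply_pos {r m i j k : ℕ} {q : Fin r} (h : 0 < pt r m i j k q) :
    (q : ℕ) + 1 = i := by
  unfold pt at h
  split_ifs at h with hq
  · exact hq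
  · exact absurd h (neg_nonpos.2 (by positivity)).not_gt
  · exact absurd h (lt_irrefl 0)

theorem pt_apply_of_lt {r m i j k : ℕ} {q : Fin r} (hij : i ≤ j) (hq : (q : ℕ) + 1 < i) :
    pt r m i j k q = 0 := by
  unfold pt
  rw [if_neg hq.ne, if_neg (by omega)]

theorem sum_fin_ite_le_eq_sum_Icc (g : ℕ → ℝ) (j r : ℕ) :
    ∑ q : Fin r, (if j + 1 ≤ (q : ℕ) + 1 then g ((q : ℕ) + 1) else 0) =
      ∑ l ∈ Finset.Icc (j + 1) r, g l := by
  rw [Fin.sum_univ_eq_sum_range (fun q => if j + 1 ≤ q + 1 then g (q + 1) else 0),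
    Finset.range_eq_Ico, Finset.sum_Ico_add' (fun l => if j + 1 ≤ l then g l else 0),
    ← Finset.sum_filter]
  congr 1
  ext l
  simp only [Finset.mem_filter, Finset.mem_Ico, Finset.mem_Icc]
  omega

theorem sum_pt {r m i j k : ℕ} (hi : 1 ≤ i) (hij : i ≤ j) (hjr : j ≤ r) :
    ∑ q : Fin r, pt r m i j k q = ((r - j : ℕ) : ℝ) * m + k := by
  set g : ℕ → ℝ := fun l => (m : ℝ) ^ (2 * r - 2 * l + 3)
  set P := ∑ l ∈ Finset.Icc (j + 1) r, g l + ((r - j : ℕ) : ℝ) * m + k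
  have hsplit : ∀ q : Fin r, pt r m i j k q =
      (if (q : ℕ) + 1 = i then P else 0) -
        if j + 1 ≤ (q : ℕ) + 1 then g ((q : ℕ) + 1) else 0 := by
    intro q
    unfold pt
    split_ifs <;> first | omega | ring
  have hcolor : ∑ q : Fin r, (if (q : ℕ) + 1 = i then P else 0) = P := by
    rw [Finset.sum_eq_single_of_mem (⟨i - 1, by omega⟩ : Fin r) (Finset.mem_univ _), if_pos]
    · simp only; omega
    · intro q _ hq
      exact if_neg fun h => hq (Fin.ext (by simp only; omega))
  rw [Finset.sum_congr rfl fun q _ => hsplit q, Finset.sum_sub_distrib, hcolor,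
    sum_fin_ite_le_eq_sum_Icc]
  ring

theorem eq_of_pos_of_mem_Apts {r m : ℕ} {x : Fin r → ℝ} (hx : x ∈ Apts r m) {q q' : Fin r}
    (hq : 0 < x q) (hq' : 0 < x q') : q = q' := by
  obtain ⟨i, j, k, -, -, -, -, -, rfl⟩ := hx
  have hq_color := add_one_eq_of_pt_apply_pos hq
  have hq'_color := add_one_eq_of_pt_apply_pos hq'
  exact Fin.ext (by omega)

theorem eq_zero_of_lt_of_mem_Apts {r m : ℕ} {x : Fin r → ℝ} (hx : x ∈ Apts r m) {q l : Fin r}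
    (hl : 0 < x l) (hq : q < l) : x q = 0 := by
  obtain ⟨i, j, k, -, hij, -, -, -, rfl⟩ := hx
  exact pt_apply_of_lt hij (by rw [← add_one_eq_of_pt_apply_pos hl]; exact Nat.succ_lt_succ hq)

theorem sum_pos_of_mem_Apts {r m : ℕ} {x : Fin r → ℝ} (hx : x ∈ Apts r m) : 0 < ∑ q, x q := by
  obtain ⟨i, j, k, hi, hij, hjr, hk, -, rfl⟩ := hx
  rw [sum_pt hi hij hjr]
  have hk' : (1 : ℝ) ≤ k := by exact_mod_cast hk
  positivity

theorem Pierced.exists_pos_apply {r : ℕ} {S : Set (Fin r → ℝ)} (hS : Pierced S)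
    (hpos : ∀ x ∈ S, 0 < ∑ q, x q) (q : Fin r) : ∃ x ∈ S, 0 < x q := by
  obtain ⟨c, hc⟩ := hS
  have hc_pos : 0 < c := by
    have hsum_linear : IsLinearMap ℝ fun x : Fin r → ℝ => ∑ q, x q :=
      ⟨fun x y => Finset.sum_add_distrib, fun a x => (Finset.mul_sum _ _ _).symm⟩
    have hsum_pos : 0 < ∑ _q : Fin r, c :=
      convexHull_min hpos (convex_halfSpace_gt hsum_linear 0) hc
    rw [Finset.sum_const, Finset.card_univ, Fintype.card_fin, nsmul_eq_mul] at hsum_pos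
    exact pos_of_mul_pos_right hsum_pos (Nat.cast_nonneg r)
  by_contra! h
  have hc_nonpos : c ≤ 0 :=
    convexHull_min h (convex_halfSpace_le (LinearMap.proj q).isLinear 0) hc
  exact hc_nonpos.not_gt hc_pos

theorem stdVec_eq_single {r i : ℕ} (hi : 1 ≤ i) (hir : i ≤ r) :
    stdVec r i = Pi.single (⟨i - 1, by omega⟩ : Fin r) 1 := by
  ext q
  simp only [stdVec, Pi.single_apply, Fin.ext_iff]
  congr 1
  exact propext (by omega)

theorem pierced_simplex_meets_axes_uniquely_general
    (r m : ℕ)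
    (S : Set (Fin r → ℝ)) (hSA : S ⊆ Apts r m) (hS : Pierced S) (hcard : S.ncard = r) :
    ∀ i : ℕ, 1 ≤ i → i ≤ r →
      ∃ t : ℝ, 0 < t ∧ t • stdVec r i ∈ convexHull ℝ S ∧
        ∀ t' : ℝ, t' • stdVec r i ∈ convexHull ℝ S → t' = t := by
  intro i hi hir
  choose f hfS hf_pos using hS.exists_pos_apply fun x hx => sum_pos_of_mem_Apts (hSA hx)
  have hf_inj : f.Injective := fun l l' h =>
    eq_of_pos_of_mem_Apts (hSA (hfS l')) (h ▸ hf_pos l) (hf_pos l')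
  have hrange : Set.range f = S :=
    Set.eq_of_subset_of_ncard_le (Set.range_subset_iff.2 hfS)
      (by rw [Set.ncard_range_of_injective hf_inj, hcard, Nat.card_fin])
      (Set.finite_of_ncard_pos (by omega))
  rw [← hrange, stdVec_eq_single hi hir]
  exact Matrix.exists_unique_smul_single_mem_convexHull_range_row (M := Matrix.of f)
    (fun l q hq => eq_zero_of_lt_of_mem_Apts (hSA (hfS l)) (hf_pos l) hq)
    (fun l q hlq => not_lt.1 fun hq => hlq (eq_of_pos_of_mem_Apts (hSA (hfS l)) (hf_pos l) hq))
    hf_pos _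

/-- the convex hull of a pierced simplex meets each coordinate axis in
exactly one point, which is of the form `t_i • e_i` with `t_i > 0`. -/
theorem pierced_simplex_meets_axes_uniquely
    (r m : ℕ) (hr : 1 ≤ r) (hm : 1 ≤ m)
    (S : Set (Fin r → ℝ)) (hSA : S ⊆ Apts r m) (hS : Pierced S) (hcard : S.ncard = r) :
    ∀ i : ℕ, 1 ≤ i → i ≤ r →
      ∃ t : ℝ, 0 < t ∧ t • stdVec r i ∈ convexHull ℝ S ∧
        ∀ t' : ℝ, t' • stdVec r i ∈ convexHull ℝ S → t' = t :=
  pierced_simplex_meets_axes_uniquely_general r m S hSA hS hcard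
end

section
/- Let r ≥ 1 and m ≥ 1 be integers. Every pierced simplex S ⊆ A(r,m) is non-degenerate, that is: (i) S is affinely independent; (ii) no proper subset of S is pierced; and (iii) the all-ones vector 1_r is not a direction of the affine hull of S, i.e., the affine hull of S is not parallel to the line ℝ·1_r. -/
/-! ### Auxiliary lemmas -/

lemma pt_apply_pos (r m i j k : ℕ) (hk : 1 ≤ k) (l : Fin r) (h : (l : ℕ) + 1 = i) :
    0 < pt r m i j k l := by
  simp only [pt, if_pos h]
  have h1 : (0:ℝ) ≤ ∑ l' ∈ Finset.Icc (j + 1) r, (m : ℝ) ^ (2 * r - 2 * l' + 3) :=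
    Finset.sum_nonneg fun l' _ => pow_nonneg (by positivity) _
  have h2 : (0:ℝ) ≤ ((r - j : ℕ) : ℝ) * (m : ℝ) := by positivity
  have h3 : (1:ℝ) ≤ (k : ℝ) := by exact_mod_cast hk
  linarith

lemma pt_apply_nonpos (r m i j k : ℕ) (l : Fin r) (h : (l : ℕ) + 1 ≠ i) :
    pt r m i j k l ≤ 0 := by
  simp only [pt, if_neg h]
  split
  · exact neg_nonpos.mpr (pow_nonneg (by positivity) _)
  · exact le_refl 0

lemma pt_apply_zero (r m i j k : ℕ) (l : Fin r) (h : (l : ℕ) + 1 ≠ i)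
    (h2 : (l : ℕ) + 1 ≤ j) : pt r m i j k l = 0 := by
  simp only [pt, if_neg h, if_neg (by omega : ¬ j + 1 ≤ (l : ℕ) + 1)]

lemma color_eq (r m i j k : ℕ) (l : Fin r) (h : 0 < pt r m i j k l) : (l : ℕ) + 1 = i := by
  by_contra hc
  exact absurd h (not_lt.mpr (pt_apply_nonpos r m i j k l hc))

open Classical in
noncomputable def colOf (r m : ℕ) (y : Fin r → ℝ) : ℕ :=
  if h : y ∈ Apts r m then h.choose else 0

lemma colOf_spec {r m : ℕ} {y : Fin r → ℝ} (h : y ∈ Apts r m) :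
    ∃ j k : ℕ, 1 ≤ colOf r m y ∧ colOf r m y ≤ j ∧ j ≤ r ∧ 1 ≤ k ∧ k ≤ m ∧
      y = pt r m (colOf r m y) j k := by
  unfold colOf
  rw [dif_pos h]
  obtain ⟨j, k, h1, h2, h3, h4, h5, h6⟩ := h.choose_spec
  exact ⟨j, k, h1, h2, h3, h4, h5, h6⟩

/-- From a piercing of a finite subset of `A(r,m)`, extract one point of each color. -/
lemma exists_colorful (r m : ℕ) (S' : Set (Fin r → ℝ))
    (h1 : S' ⊆ Apts r m) (hfin : S'.Finite) (hp : Pierced S') :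
    ∃ f : Fin r → (Fin r → ℝ), (∀ l, f l ∈ S') ∧ (∀ l, 0 < f l l) ∧ Function.Injective f := by
  classical
  obtain ⟨c, hc⟩ := hp
  rw [← hfin.coe_toFinset, Finset.convexHull_eq] at hc
  obtain ⟨w, hw0, hw1, hwc⟩ := hc
  rw [Finset.centerMass_eq_of_sum_1 _ _ hw1] at hwc
  set T := hfin.toFinset with hT
  have hmem : ∀ y ∈ T, y ∈ Apts r m := fun y hy => h1 (hfin.mem_toFinset.mp hy)
  have hrow : ∀ l : Fin r, ∑ y ∈ T, w y * y l = c := by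
    intro l
    have := congrFun hwc l
    simpa [Finset.sum_apply] using this
  -- support nonempty
  have hwex : ∃ y ∈ T, 0 < w y := by
    by_contra hcon
    push_neg at hcon
    have : ∑ y ∈ T, w y ≤ 0 := Finset.sum_nonpos hcon
    linarith
  obtain ⟨y₁, hy₁T, hy₁w⟩ := hwex
  obtain ⟨y₀, hy₀, hy₀min⟩ := (T.filter fun y => 0 < w y).exists_min_image (colOf r m)
    ⟨y₁, Finset.mem_filter.mpr ⟨hy₁T, hy₁w⟩⟩
  have hy₀T : y₀ ∈ T := (Finset.mem_filter.mp hy₀).1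
  have hy₀w : 0 < w y₀ := (Finset.mem_filter.mp hy₀).2
  obtain ⟨j₀, k₀, hi₀1, hij₀, hj₀r, hk₀1, hk₀m, hy₀eq⟩ := colOf_spec (hmem y₀ hy₀T)
  set i₀ := colOf r m y₀ with hi₀
  have hl₀lt : i₀ - 1 < r := by omega
  set l₀ : Fin r := ⟨i₀ - 1, hl₀lt⟩ with hl₀def
  have hl₀1 : (l₀ : ℕ) + 1 = i₀ := by
    show i₀ - 1 + 1 = i₀
    omega
  -- c is positive
  have hcpos : 0 < c := by
    rw [← hrow l₀]
    apply Finset.sum_pos'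
    · intro y hy
      rcases eq_or_lt_of_le (hw0 y hy) with h | h
      · rw [← h, zero_mul]
      · obtain ⟨j, k, ha1, ha2, ha3, ha4, ha5, ha6⟩ := colOf_spec (hmem y hy)
        have hmin : i₀ ≤ colOf r m y := hy₀min y (Finset.mem_filter.mpr ⟨hy, h⟩)
        by_cases hcase : (l₀ : ℕ) + 1 = colOf r m y
        · have := pt_apply_pos r m (colOf r m y) j k ha4 l₀ hcase
          rw [← ha6] at this
          positivity
        · have : y l₀ = 0 := by
            rw [ha6]
            exact pt_apply_zero r m (colOf r m y) j k l₀ hcase (by omega)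
          rw [this, mul_zero]
    · refine ⟨y₀, hy₀T, mul_pos hy₀w ?_⟩
      have := pt_apply_pos r m i₀ j₀ k₀ hk₀1 l₀ hl₀1
      rwa [← hy₀eq] at this
  -- for each coordinate, a positively weighted point with positive entry there
  have hexr : ∀ l : Fin r, ∃ y, y ∈ T ∧ 0 < w y ∧ 0 < y l := by
    intro l
    by_contra hcon
    push_neg at hcon
    have hle : ∀ y ∈ T, w y * y l ≤ 0 := by
      intro y hy
      rcases eq_or_lt_of_le (hw0 y hy) with h | h
      · rw [← h, zero_mul]
      · exact mul_nonpos_of_nonneg_of_nonpos h.le (hcon y hy h)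
    have := Finset.sum_nonpos hle
    rw [hrow l] at this
    linarith
  choose f hfT hfw hfpos using hexr
  refine ⟨f, fun l => hfin.mem_toFinset.mp (hfT l), hfpos, ?_⟩
  intro l l' hll
  have h1' := hfpos l
  have h2' : 0 < f l l' := by rw [hll]; exact hfpos l'
  obtain ⟨j, k, _, _, _, _, _, heq⟩ := colOf_spec (hmem (f l) (hfT l))
  rw [heq] at h1' h2'
  have e1 := color_eq _ _ _ _ _ _ h1'
  have e2 := color_eq _ _ _ _ _ _ h2'
  exact Fin.ext (by omega)

/-- Any finite pierced subset of `A(r,m)` has at least `r` points. -/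
lemma pierced_ncard (r m : ℕ) (S' : Set (Fin r → ℝ))
    (h1 : S' ⊆ Apts r m) (hfin : S'.Finite) (hp : Pierced S') : r ≤ S'.ncard := by
  obtain ⟨f, hfS, _, hfinj⟩ := exists_colorful r m S' h1 hfin hp
  have hsub : Set.range f ⊆ S' := Set.range_subset_iff.mpr hfS
  have h2 : (Set.range f).ncard = r := by
    rw [← Nat.card_coe_set_eq, Nat.card_range_of_injective hfinj,
      Nat.card_eq_fintype_card, Fintype.card_fin]
  calc r = (Set.range f).ncard := h2.symm
    _ ≤ S'.ncard := Set.ncard_le_ncard hsub hfin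

/-- every pierced simplex of `A(r,m)` is non-degenerate. -/
theorem pierced_simplex_nondegenerate
    (r m : ℕ) (hr : 1 ≤ r) (hm : 1 ≤ m)
    (S : Set (Fin r → ℝ)) (hSA : S ⊆ Apts r m) (hS : Pierced S) (hcard : S.ncard = r) :
    AffineIndependent ℝ ((↑) : S → (Fin r → ℝ)) ∧
    (∀ S' : Set (Fin r → ℝ), S' ⊂ S → ¬ Pierced S') ∧
    (fun _ => (1 : ℝ) : Fin r → ℝ) ∉ (affineSpan ℝ S).direction := by
  classical
  have hfin : S.Finite := by
    by_contra h
    rw [Set.Infinite.ncard h] at hcard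
    omega
  obtain ⟨f, hfS, hfpos, hfinj⟩ := exists_colorful r m S hSA hfin hS
  have hrange : Set.range f = S := by
    apply Set.eq_of_subset_of_ncard_le (Set.range_subset_iff.mpr hfS) _ hfin
    rw [hcard, ← Nat.card_coe_set_eq, Nat.card_range_of_injective hfinj,
      Nat.card_eq_fintype_card, Fintype.card_fin]
  -- structure of columns
  have hcol : ∀ l : Fin r, ∃ j k, 1 ≤ k ∧ (l : ℕ) + 1 ≤ j ∧ j ≤ r ∧
      f l = pt r m ((l : ℕ) + 1) j k := by
    intro l
    obtain ⟨j, k, hi1, hij, hjr, hk1, hkm, heq⟩ := colOf_spec (hSA (hfS l))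
    have hi : (l : ℕ) + 1 = colOf r m (f l) := by
      apply color_eq r m _ j k l
      rw [← heq]
      exact hfpos l
    exact ⟨j, k, hk1, by omega, hjr, by rw [hi]; exact heq⟩
  have hzero : ∀ l l' : Fin r, (l' : ℕ) < (l : ℕ) → f l l' = 0 := by
    intro l l' h
    obtain ⟨j, k, hk1, hlj, hjr, heq⟩ := hcol l
    rw [heq]
    exact pt_apply_zero _ _ _ _ _ _ (by omega) (by omega)
  have hnonpos : ∀ l l' : Fin r, l' ≠ l → f l l' ≤ 0 := by
    intro l l' h
    obtain ⟨j, k, hk1, hlj, hjr, heq⟩ := hcol l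
    rw [heq]
    have : (l' : ℕ) ≠ (l : ℕ) := fun hc => h (Fin.ext hc)
    exact pt_apply_nonpos _ _ _ _ _ _ (by omega)
  -- (i) affine independence
  have hAI : AffineIndependent ℝ f := by
    rw [affineIndependent_iff_of_fintype]
    intro wt hw hsum
    rw [Finset.weightedVSub_eq_linear_combination _ hw] at hsum
    have key : ∀ n : ℕ, ∀ h : n < r, wt ⟨n, h⟩ = 0 := by
      intro n
      induction n using Nat.strong_induction_on with
      | _ n ih =>
        intro h
        have hr0 : ∑ l : Fin r, wt l * f l ⟨n, h⟩ = 0 := by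
          have := congrFun hsum ⟨n, h⟩
          simpa [Finset.sum_apply] using this
        have hsingle : ∑ l : Fin r, wt l * f l ⟨n, h⟩
            = wt ⟨n, h⟩ * f ⟨n, h⟩ ⟨n, h⟩ := by
          apply Finset.sum_eq_single
          · intro l _ hne
            rcases lt_trichotomy (l : ℕ) n with hlt | heq | hgt
            · have := ih (l : ℕ) hlt l.isLt
              simp only [Fin.eta] at this
              rw [this, zero_mul]
            · exact absurd (Fin.ext heq) hne
            · rw [hzero l ⟨n, h⟩ hgt, mul_zero]
          · intro habs
            exact absurd (Finset.mem_univ _) habs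
        rw [hsingle] at hr0
        have := hfpos ⟨n, h⟩
        rcases mul_eq_zero.mp hr0 with h' | h'
        · exact h'
        · exact absurd h' (ne_of_gt this)
    intro l
    have := key (l : ℕ) l.isLt
    simpa [Fin.eta] using this
  refine ⟨?_, ?_, ?_⟩
  · -- transfer to the subtype
    let e2 : Fin r ≃ ↥S := (Equiv.ofInjective f hfinj).trans (Equiv.setCongr hrange)
    have hcomp : ((↑) : S → (Fin r → ℝ)) ∘ e2 = f := funext fun l => by
      simp [e2, Equiv.trans_apply, Equiv.setCongr_apply]
    exact (affineIndependent_equiv e2).mp (hcomp ▸ hAI)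
  · -- (ii) no proper pierced subset
    intro S' hss hp'
    have h1 : S' ⊆ Apts r m := hss.subset.trans hSA
    have h2 : S'.Finite := hfin.subset hss.subset
    have h3 := pierced_ncard r m S' h1 h2 hp'
    have h4 : S'.ncard < S.ncard := Set.ncard_lt_ncard hss hfin
    omega
  · -- (iii) the direction does not contain 1
    intro hmem1
    have hl0 : (0 : ℕ) < r := hr
    set l0 : Fin r := ⟨0, hl0⟩ with hl0def
    rw [direction_affineSpan, ← hrange,
      vectorSpan_range_eq_span_range_vsub_right ℝ f l0] at hmem1
    rw [Submodule.mem_span_range_iff_exists_fun] at hmem1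
    obtain ⟨cf, hcf⟩ := hmem1
    set s : ℝ := ∑ l : Fin r, cf l with hs
    set wt : Fin r → ℝ := fun l => cf l - (if l = l0 then s else 0) with hwt
    have hwsum : ∑ l : Fin r, wt l = 0 := by
      simp only [hwt, Finset.sum_sub_distrib, Finset.sum_ite_eq', Finset.mem_univ, if_true]
      simp [hs]
    have hwp : ∑ l : Fin r, wt l • f l = (fun _ => (1 : ℝ)) := by
      have h1 : ∑ l : Fin r, wt l • f l = (∑ l : Fin r, cf l • f l) - s • f l0 := by
        simp only [hwt, sub_smul, Finset.sum_sub_distrib, ite_smul, zero_smul,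
          Finset.sum_ite_eq', Finset.mem_univ, if_true]
      have h2 : (∑ l : Fin r, cf l • (f l -ᵥ f l0)) = (∑ l : Fin r, cf l • f l) - s • f l0 := by
        simp only [vsub_eq_sub, smul_sub, Finset.sum_sub_distrib, ← Finset.sum_smul, hs]
      rw [h1, ← h2, hcf]
    have key : ∀ n : ℕ, ∀ h : n < r, 0 < wt ⟨n, h⟩ := by
      intro n
      induction n using Nat.strong_induction_on with
      | _ n ih =>
        intro h
        have hr1 : ∑ l : Fin r, wt l * f l ⟨n, h⟩ = 1 := by
          have := congrFun hwp ⟨n, h⟩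
          simpa [Finset.sum_apply] using this
        have hsplit : wt ⟨n, h⟩ * f ⟨n, h⟩ ⟨n, h⟩
            + ∑ l ∈ Finset.univ.erase ⟨n, h⟩, wt l * f l ⟨n, h⟩
            = ∑ l : Fin r, wt l * f l ⟨n, h⟩ :=
          Finset.add_sum_erase Finset.univ (fun l => wt l * f l ⟨n, h⟩) (Finset.mem_univ _)
        have hrest : ∑ l ∈ Finset.univ.erase ⟨n, h⟩, wt l * f l ⟨n, h⟩ ≤ 0 := by
          apply Finset.sum_nonpos
          intro l hl
          have hne : l ≠ ⟨n, h⟩ := (Finset.mem_erase.mp hl).1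
          have hnev : (l : ℕ) ≠ n := fun hc => hne (Fin.ext hc)
          rcases lt_or_gt_of_ne hnev with hlt | hgt
          · have h1 : 0 < wt l := by
              have := ih (l : ℕ) hlt l.isLt
              simpa [Fin.eta] using this
            have h2 : f l ⟨n, h⟩ ≤ 0 := hnonpos l ⟨n, h⟩ (Ne.symm hne)
            exact mul_nonpos_of_nonneg_of_nonpos h1.le h2
          · rw [hzero l ⟨n, h⟩ hgt, mul_zero]
        have hd : 0 < f ⟨n, h⟩ ⟨n, h⟩ := hfpos ⟨n, h⟩
        have hprod : 1 ≤ wt ⟨n, h⟩ * f ⟨n, h⟩ ⟨n, h⟩ := by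
          rw [hr1] at hsplit
          linarith
        nlinarith
    have hne : Nonempty (Fin r) := ⟨⟨0, hl0⟩⟩
    have hpos : 0 < ∑ l : Fin r, wt l := by
      apply Finset.sum_pos
      · intro l _
        have := key (l : ℕ) l.isLt
        simpa [Fin.eta] using this
      · exact Finset.univ_nonempty
    rw [hwsum] at hpos
    exact lt_irrefl 0 hpos
end
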